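/- Let G be a compact group acting freely and measurably on X, with measurable orbit selector γ and measurable representative inversion τ : X → G satisfying τ(x)·γ(x) = x and τ(g·x) = g·τ(x) for all x, g. If P is G-invariant and X ∼ P, then τ(X) has distribution λ, the normalized Haar measure on G, and τ(X) is independent of γ(X). -/

import Mathlib

/-!
Since `P` is `G`-invariant, `X ∼ P` has the same law as `g • X` with `g ∼ μ` independent of `X`.
Equivariance turns `(τ, γ)(g • X)` into `(g * τ X, γ X)`, and right invariance of `μ` makes
`g * τ X` again `μ`-distributed and independent of `X`.
-/

open MeasureTheory

namespace MeasureTheory.Measure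

theorem map_smul_prod_eq_self {G X : Type*} [SMul G X] [MeasurableSpace G] [MeasurableSpace X]
    [MeasurableSMul₂ G X] (μ : Measure G) [IsProbabilityMeasure μ] (P : Measure X) [SFinite P]
    (hP : ∀ g : G, map (g • ·) P = P) :
    map (fun p : G × X => p.1 • p.2) (μ.prod P) = P := by
  have hact : Measurable fun p : G × X => p.1 • p.2 := measurable_fst.smul measurable_snd
  ext A hA
  have hsection : ∀ g : G, P (Prod.mk g ⁻¹' ((fun p : G × X => p.1 • p.2) ⁻¹' A)) = P A := by
    intro g
    conv_rhs => rw [← hP g, map_apply (measurable_const_smul g) hA]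
    rfl
  rw [map_apply hact hA, prod_apply (hact hA)]
  simp [hsection]

theorem measurePreserving_mul_right_prod {G α : Type*} [Mul G] [MeasurableSpace G]
    [MeasurableSpace α] (μ : Measure G) [SFinite μ] [μ.IsMulRightInvariant] (ν : Measure α)
    [SFinite ν] {f : α → G} (hf : Measurable fun p : G × α => p.1 * f p.2) :
    MeasurePreserving (fun p : G × α => (p.1 * f p.2, p.2)) (μ.prod ν) (μ.prod ν) :=
  have hskew : MeasurePreserving (fun q : α × G => (q.1, q.2 * f q.1)) (ν.prod μ) (ν.prod μ) :=
    (MeasurePreserving.id ν).skew_product (g := fun a g => g * f a) (hf.comp measurable_swap)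
      (ae_of_all _ fun a => map_mul_right_eq_self μ (f a))
  measurePreserving_swap.comp (hskew.comp measurePreserving_swap)

end MeasureTheory.Measure

open Measure in
theorem repInversion_haar_and_indep_general {G X : Type*} [Group G] [MeasurableSpace G]
    [MulAction G X] [MeasurableSpace X] [MeasurableSMul₂ G X]
    (μ : Measure G) [IsProbabilityMeasure μ] [μ.IsMulRightInvariant]
    (γ : X → X) (hγmeas : Measurable γ)
    (hγinv : ∀ (g : G) (x : X), γ (g • x) = γ x)
    (τ : X → G) (hτmeas : Measurable τ)
    (hτequiv : ∀ (g : G) (x : X), τ (g • x) = g * τ x)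
    (P : Measure X) [IsProbabilityMeasure P]
    (hP : ∀ g : G, Measure.map (fun x => g • x) P = P) :
    Measure.map τ P = μ ∧
      Measure.map (fun x => (τ x, γ x)) P = μ.prod (Measure.map γ P) := by
  have hact : Measurable fun p : G × X => p.1 • p.2 := measurable_fst.smul measurable_snd
  have hpair : Measurable fun x => (τ x, γ x) := hτmeas.prodMk hγmeas
  have hshift : Measurable fun p : G × X => p.1 * τ p.2 := by
    simpa only [Function.comp_def, hτequiv] using hτmeas.comp hact
  have hjoint : map (fun x => (τ x, γ x)) P = μ.prod (map γ P) := calc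
    map (fun x => (τ x, γ x)) P
        = map (fun x => (τ x, γ x)) (map (fun p : G × X => p.1 • p.2) (μ.prod P)) := by
      rw [map_smul_prod_eq_self μ P hP]
    _ = map (Prod.map id γ) (map (fun p : G × X => (p.1 * τ p.2, p.2)) (μ.prod P)) := by
      rw [map_map hpair hact,
        map_map (measurable_id.prodMap hγmeas) (hshift.prodMk measurable_snd)]
      congr 1
      funext p
      simp [hτequiv, hγinv]
    _ = μ.prod (map γ P) := by
      rw [(measurePreserving_mul_right_prod μ P hshift).map_eq,
        ← map_prod_map _ _ measurable_id hγmeas, map_id]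
  refine ⟨?_, hjoint⟩
  have : IsProbabilityMeasure (map γ P) := isProbabilityMeasure_map hγmeas.aemeasurable
  calc map τ P = map Prod.fst (map (fun x => (τ x, γ x)) P) := by
        rw [map_map measurable_fst hpair]; rfl
    _ = μ := by rw [hjoint, map_fst_prod, measure_univ, one_smul]

/-- For a free measurable action of a compact group `G` on `X` with measurable orbit
selector `γ` and measurable representative inversion `τ` (`τ(x) • γ(x) = x`,
`τ(g•x) = g * τ(x)`): if `P` is `G`-invariant and `X ∼ P`, then `τ(X) ∼ λ` (normalized
Haar) and `τ(X)` is independent of `γ(X)`, i.e. the joint law of `(τ(X), γ(X))` is the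
product `λ ⊗ (γ_*P)`. -/
theorem repInversion_haar_and_indep {G X : Type*} [Group G] [TopologicalSpace G]
    [IsTopologicalGroup G] [CompactSpace G] [MeasurableSpace G] [BorelSpace G]
    [MulAction G X] [MeasurableSpace X] [MeasurableSMul₂ G X]
    (μ : Measure G) [IsProbabilityMeasure μ] [μ.IsMulLeftInvariant] [μ.IsMulRightInvariant]
    (hfree : ∀ (g : G) (x : X), g • x = x → g = 1)
    (γ : X → X) (hγmeas : Measurable γ)
    (hγinv : ∀ (g : G) (x : X), γ (g • x) = γ x)
    (hγorb : ∀ x : X, γ x ∈ MulAction.orbit G x)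
    (τ : X → G) (hτmeas : Measurable τ)
    (hτγ : ∀ x : X, τ x • γ x = x)
    (hτequiv : ∀ (g : G) (x : X), τ (g • x) = g * τ x)
    (P : Measure X) [IsProbabilityMeasure P]
    (hP : ∀ g : G, Measure.map (fun x => g • x) P = P) :
    Measure.map τ P = μ ∧
      Measure.map (fun x => (τ x, γ x)) P = μ.prod (Measure.map γ P) :=
  repInversion_haar_and_indep_general μ γ hγmeas hγinv τ hτmeas hτequiv P hP
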